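/- For every p > 1 and all real a, b: F(min(a,1), min(b,1)) ≤ F(a,b) and F(max(a,-1), max(b,-1)) ≤ F(a,b). -/

import Mathlib

noncomputable def F (p a b : ℝ) : ℝ :=
  |b| ^ p - |a| ^ p - p * a * |a| ^ (p - 2) * (b - a)

/-!
`F p a b` is the Bregman divergence `D(a, b)` of `φ = |·|^p`: the gap at `b` between `φ` and its
tangent line at `a`; it is nonnegative by Young's inequality. For any `φ` with nonnegative Bregman
divergence, `φ'` is monotone, so in the three-point identity
`D(a, b) = D(a, c) + D(c, b) + (φ'(c) - φ'(a)) (b - c)` the last term is nonnegative whenever `c`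
lies between `a` and `b`. Hence truncating both arguments at `c` can only decrease `D`; truncation
from below reduces to truncation from above through the reflection `x ↦ -x`.
-/

open Real

def bregmanDiv (φ φ' : ℝ → ℝ) (a b : ℝ) : ℝ := φ b - φ a - φ' a * (b - a)

section Bregman

variable {φ φ' : ℝ → ℝ}

theorem bregmanDiv_self (φ φ' : ℝ → ℝ) (a : ℝ) : bregmanDiv φ φ' a a = 0 := by
  simp [bregmanDiv]

theorem bregmanDiv_eq_add_add (φ φ' : ℝ → ℝ) (a b c : ℝ) :
    bregmanDiv φ φ' a b =
      bregmanDiv φ φ' a c + bregmanDiv φ φ' c b + (φ' c - φ' a) * (b - c) := by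
  unfold bregmanDiv; ring

theorem bregmanDiv_comp_neg (φ φ' : ℝ → ℝ) (a b : ℝ) :
    bregmanDiv (fun x => φ (-x)) (fun x => -φ' (-x)) a b = bregmanDiv φ φ' (-a) (-b) := by
  unfold bregmanDiv; ring

theorem monotone_of_bregmanDiv_nonneg (h : ∀ a b, 0 ≤ bregmanDiv φ φ' a b) : Monotone φ' := by
  intro a c hac
  rcases hac.eq_or_lt with rfl | hlt
  · rfl
  have key : (φ' c - φ' a) * (c - a) = bregmanDiv φ φ' a c + bregmanDiv φ φ' c a := by
    unfold bregmanDiv; ring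
  have hprod : 0 ≤ (φ' c - φ' a) * (c - a) := key ▸ add_nonneg (h a c) (h c a)
  exact sub_nonneg.1 (nonneg_of_mul_nonneg_left hprod (sub_pos.2 hlt))

theorem bregmanDiv_add_le_of_mem_uIcc (h : ∀ a b, 0 ≤ bregmanDiv φ φ' a b) {a b c : ℝ}
    (hc : c ∈ Set.uIcc a b) :
    bregmanDiv φ φ' a c + bregmanDiv φ φ' c b ≤ bregmanDiv φ φ' a b := by
  have hmono := monotone_of_bregmanDiv_nonneg h
  have hcross : 0 ≤ (φ' c - φ' a) * (b - c) := by
    rcases Set.mem_uIcc.1 hc with ⟨hac, hcb⟩ | ⟨hbc, hca⟩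
    · exact mul_nonneg (sub_nonneg.2 (hmono hac)) (sub_nonneg.2 hcb)
    · exact mul_nonneg_of_nonpos_of_nonpos (sub_nonpos.2 (hmono hca)) (sub_nonpos.2 hbc)
  linarith [bregmanDiv_eq_add_add φ φ' a b c]

theorem bregmanDiv_min_min_le (h : ∀ a b, 0 ≤ bregmanDiv φ φ' a b) (a b c : ℝ) :
    bregmanDiv φ φ' (min a c) (min b c) ≤ bregmanDiv φ φ' a b := by
  rcases le_total a c with hac | hca <;> rcases le_total b c with hbc | hcb
  · rw [min_eq_left hac, min_eq_left hbc]
  · rw [min_eq_left hac, min_eq_right hcb]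
    linarith [h c b, bregmanDiv_add_le_of_mem_uIcc h (Set.mem_uIcc.2 (.inl ⟨hac, hcb⟩))]
  · rw [min_eq_right hca, min_eq_left hbc]
    linarith [h a c, bregmanDiv_add_le_of_mem_uIcc h (Set.mem_uIcc.2 (.inr ⟨hbc, hca⟩))]
  · rw [min_eq_right hca, min_eq_right hcb, bregmanDiv_self]
    exact h a b

theorem bregmanDiv_max_max_le (h : ∀ a b, 0 ≤ bregmanDiv φ φ' a b) (a b c : ℝ) :
    bregmanDiv φ φ' (max a c) (max b c) ≤ bregmanDiv φ φ' a b := by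
  have h_neg : ∀ a b, 0 ≤ bregmanDiv (fun x => φ (-x)) (fun x => -φ' (-x)) a b := fun a b => by
    rw [bregmanDiv_comp_neg]; exact h _ _
  simpa [bregmanDiv_comp_neg, min_neg_neg] using bregmanDiv_min_min_le h_neg (-a) (-b) (-c)

end Bregman

theorem mul_rpow_sub_one_mul_le {p x y : ℝ} (hp : 1 < p) (hx : 0 ≤ x) (hy : 0 ≤ y) :
    p * (x ^ (p - 1) * y) ≤ (p - 1) * x ^ p + y ^ p := by
  have young := young_inequality_of_nonneg (rpow_nonneg hx (p - 1)) hy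
    (HolderConjugate.conjExponent hp).symm
  rw [← rpow_mul hx, conjExponent, mul_div_cancel₀ _ (sub_pos.2 hp).ne'] at young
  have hp0 : 0 < p := by linarith
  calc p * (x ^ (p - 1) * y) ≤ p * (x ^ p / (p / (p - 1)) + y ^ p / p) := by gcongr
    _ = (p - 1) * x ^ p + y ^ p := by field_simp

theorem self_mul_abs_rpow_sub_two_mul_self {p : ℝ} (hp : p ≠ 0) (a : ℝ) :
    a * |a| ^ (p - 2) * a = |a| ^ p := by
  rw [mul_right_comm, ← abs_mul_abs_self a, ← sq, ← rpow_two,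
    ← rpow_add' (abs_nonneg a) (by simpa using hp), add_sub_cancel]

theorem abs_self_mul_abs_rpow_sub_two {p : ℝ} (hp : p ≠ 1) (a : ℝ) :
    |a * |a| ^ (p - 2)| = |a| ^ (p - 1) := by
  rw [abs_mul, abs_of_nonneg (rpow_nonneg (abs_nonneg a) _), ← rpow_one_add' (abs_nonneg a)]
  · ring_nf
  · contrapose! hp; linarith

theorem F_eq_bregmanDiv (p : ℝ) :
    F p = bregmanDiv (fun x => |x| ^ p) (fun x => p * x * |x| ^ (p - 2)) := rfl

theorem F_nonneg {p : ℝ} (hp : 1 < p) (a b : ℝ) : 0 ≤ F p a b := by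
  have hcross : a * |a| ^ (p - 2) * b ≤ |a| ^ (p - 1) * |b| := by
    rw [← abs_self_mul_abs_rpow_sub_two hp.ne' a, ← abs_mul]
    exact le_abs_self _
  have hdiag := self_mul_abs_rpow_sub_two_mul_self (p := p) (by linarith) a
  have young := mul_rpow_sub_one_mul_le hp (abs_nonneg a) (abs_nonneg b)
  unfold F
  linear_combination young + p * hcross - p * hdiag

theorem F_contraction (p : ℝ) (hp : 1 < p) (a b : ℝ) :
    F p (min a 1) (min b 1) ≤ F p a b ∧
    F p (max a (-1)) (max b (-1)) ≤ F p a b := by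
  have h : ∀ a b, 0 ≤ bregmanDiv (fun x => |x| ^ p) (fun x => p * x * |x| ^ (p - 2)) a b :=
    F_nonneg hp
  rw [F_eq_bregmanDiv]
  exact ⟨bregmanDiv_min_min_le h a b 1, bregmanDiv_max_max_le h a b (-1)⟩
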